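/- Let $h \geq 2$ be even and $g \geq 1$ with $g(h+2) \equiv 0 \pmod 4$, and set $n = (3h+2)/2$. If the complete $(n-h)$-partite equipartite graph with parts of size $g$ admits a 1-factorization (which it does since $g(n-h)$ is even), then there exists a decomposition of $K_{n(g)}$ minus all edges among the first $h$ parts into edge-disjoint copies of $K_4-e$: pair each of the $(n-h-1)g = hg/2$ one-factors $F_l$ with a distinct pair $\{x_l, y_l\}$ partitioning the vertices of the first $h$ parts, and form the blocks $[f_1, f_2, x_l - y_l]$ for $\{f_1,f_2\} \in F_l$. -/

import Mathlib

open SimpleGraph Finset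

/-- `K₄ - e`: the complete graph on `{0,1,2,3}` minus the edge `{2,3}`.
In the block notation `[a,b,c-d]`, `a = 0`, `b = 1`, `c = 2`, `d = 3`. -/
def K4e : SimpleGraph (Fin 4) where
  Adj x y := x ≠ y ∧ ¬(x = 2 ∧ y = 3) ∧ ¬(x = 3 ∧ y = 2)
  symm := by
    constructor
    intro x y h
    exact ⟨h.1.symm, fun hc => h.2.2 ⟨hc.2, hc.1⟩, fun hc => h.2.1 ⟨hc.2, hc.1⟩⟩
  loopless := ⟨fun x h => h.1 rfl⟩

instance : DecidableRel K4e.Adj :=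
  fun x y => inferInstanceAs (Decidable (x ≠ y ∧ ¬(x = 2 ∧ y = 3) ∧ ¬(x = 3 ∧ y = 2)))

/-- The edge set of the copy of `K₄ - e` with vertices `f 0, f 1, f 2, f 3`. -/
def copyEdges {V : Type*} (f : Fin 4 → V) : Set (Sym2 V) :=
  Sym2.map f '' K4e.edgeSet

/-- `B` is a packing of `H` by edge-disjoint copies of `K₄ - e`. -/
def IsK4ePacking {V : Type*} (H : SimpleGraph V) (B : Finset (Fin 4 → V)) : Prop :=
  (∀ f ∈ B, Function.Injective f) ∧
  (∀ f ∈ B, copyEdges f ⊆ H.edgeSet) ∧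
  (∀ f ∈ B, ∀ g ∈ B, f ≠ g → Disjoint (copyEdges f) (copyEdges g))

/-- The leave of a packing: the edges of `H` covered by no copy. -/
def leave {V : Type*} (H : SimpleGraph V) (B : Finset (Fin 4 → V)) : Set (Sym2 V) :=
  H.edgeSet \ ⋃ f ∈ B, copyEdges f

/-- `B` is a decomposition of `H` into edge-disjoint copies of `K₄ - e`. -/
def IsK4eDecomp {V : Type*} (H : SimpleGraph V) (B : Finset (Fin 4 → V)) : Prop :=
  IsK4ePacking H B ∧ ∀ e ∈ H.edgeSet, ∃ f ∈ B, e ∈ copyEdges f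

/-- The complete `n`-partite equipartite graph `K_{n(g)}`: the parts are
`{i} × Fin g` for `i : Fin n`, and two vertices are adjacent iff they lie in different parts. -/
def Kng (n g : ℕ) : SimpleGraph (Fin n × Fin g) where
  Adj x y := x.1 ≠ y.1
  symm := ⟨fun _ _ h => h.symm⟩
  loopless := ⟨fun _ h => h rfl⟩

instance (n g : ℕ) : DecidableRel (Kng n g).Adj :=
  fun x y => inferInstanceAs (Decidable (x.1 ≠ y.1))

/-- `K_{n(g)}` minus all edges among the first `h` parts. -/
def KngMinusHole (n g h : ℕ) : SimpleGraph (Fin n × Fin g) where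
  Adj x y := x.1 ≠ y.1 ∧ ¬(x.1.val < h ∧ y.1.val < h)
  symm := ⟨fun _ _ hxy => ⟨hxy.1.symm, fun hc => hxy.2 ⟨hc.2, hc.1⟩⟩⟩
  loopless := ⟨fun _ hxy => hxy.1 rfl⟩

/-!
The vertices outside the hole carry a copy of `K_{(n-h)(g)}`, and the graph is the join of the
edgeless graph on the hole `Fin h × Fin g` with that copy. Since `2 (n - h - 1) = h`, the hole
splits into pairs `{x_l, y_l}`, one for each of the `(n - h - 1) g` one-factors `F_l`. An edge
`ab ∈ F_l` lies in the block `[a, b, x_l - y_l]` only, and an edge from an outer vertex `a` to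
`x_l` or `y_l` lies only in the block of the `F_l`-edge at `a`.
-/

open Function

lemma K4e_edgeSet : K4e.edgeSet = {s(0, 1), s(0, 2), s(0, 3), s(1, 2), s(1, 3)} := by
  ext e
  induction e using Sym2.ind with
  | _ x y =>
    simp only [SimpleGraph.mem_edgeSet, Set.mem_insert_iff, Set.mem_singleton_iff]
    fin_cases x <;> fin_cases y <;> simp [K4e]

lemma mem_copyEdges_vecCons {V : Type*} {a b c d : V} {z : Sym2 V} :
    z ∈ copyEdges ![a, b, c, d] ↔
      z = s(a, b) ∨ z = s(a, c) ∨ z = s(a, d) ∨ z = s(b, c) ∨ z = s(b, d) := by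
  simp [copyEdges, K4e_edgeSet, eq_comm]

lemma copyEdges_comp {V V' : Type*} (φ : V → V') (f : Fin 4 → V) :
    copyEdges (φ ∘ f) = Sym2.map φ '' copyEdges f := by
  simp only [copyEdges, Sym2.map_comp, Set.image_comp]

theorem IsK4eDecomp.map_iso {V V' : Type*} {H : SimpleGraph V} {H' : SimpleGraph V'}
    {B : Finset (Fin 4 → V)} (hB : IsK4eDecomp H B) (φ : H ≃g H') :
    IsK4eDecomp H' (B.map φ.toEquiv.toEmbedding.arrowCongrRight) := by
  obtain ⟨⟨hinj, hsub, hdisj⟩, hcover⟩ := hB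
  have hmap : Injective (Sym2.map φ) := Sym2.map.injective φ.injective
  simp only [IsK4eDecomp, IsK4ePacking, Finset.forall_mem_map]
  refine ⟨⟨fun f hf => φ.injective.comp (hinj f hf), fun f hf => ?_, fun f hf f' hf' hne => ?_⟩,
    fun z hz => ?_⟩
  · simp only [Function.Embedding.arrowCongrRight_apply]
    rw [copyEdges_comp, Set.image_subset_iff]
    exact fun e he => φ.map_mem_edgeSet_iff.mpr (hsub f hf he)
  · simp only [Function.Embedding.arrowCongrRight_apply, copyEdges_comp]
    exact (Set.disjoint_image_iff hmap).mpr (hdisj f hf f' hf' fun h => hne (by rw [h]))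
  · obtain ⟨f, hf, he⟩ := hcover (z.map φ.symm) (φ.symm.map_mem_edgeSet_iff.mpr hz)
    refine ⟨_, Finset.mem_map_of_mem _ hf, ?_⟩
    simp only [Function.Embedding.arrowCongrRight_apply, copyEdges_comp]
    exact ⟨_, he, by simp [Sym2.map_map]⟩

lemma SimpleGraph.Subgraph.IsMatching.eq_of_mem_edgeSet {V : Type*} {G : SimpleGraph V}
    {M : G.Subgraph} (hM : M.IsMatching) {v : V} {e e' : Sym2 V} (he : e ∈ M.edgeSet)
    (he' : e' ∈ M.edgeSet) (hv : v ∈ e) (hv' : v ∈ e') : e = e' := by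
  obtain ⟨w, rfl⟩ := Sym2.mem_iff_exists.mp hv
  obtain ⟨w', rfl⟩ := Sym2.mem_iff_exists.mp hv'
  rw [hM.eq_of_adj_left (M.mem_edgeSet.mp he) (M.mem_edgeSet.mp he')]

def emptyJoin (S : Type*) {W : Type*} (G : SimpleGraph W) : SimpleGraph (S ⊕ W) :=
  (⊥ ⊕g G) ⊔ completeBipartiteGraph S W

section emptyJoin

variable {S S' W : Type*} {G : SimpleGraph W}

@[simp]
lemma emptyJoin_adj {x y : S ⊕ W} :
    (emptyJoin S G).Adj x y ↔ match x, y with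
      | .inr a, .inr b => G.Adj a b
      | .inl _, .inl _ => False
      | _, _ => True := by
  rcases x with x | x <;> rcases y with y | y <;> simp [emptyJoin]

def emptyJoinCongr (e : S ≃ S') : emptyJoin S G ≃g emptyJoin S' G where
  toEquiv := e.sumCongr (Equiv.refl W)
  map_rel_iff' := by rintro (_ | _) (_ | _) <;> simp

end emptyJoin

def emptyJoinIsoKngMinusHole {n g h k : ℕ} (hk : h + k = n) :
    emptyJoin (Fin h × Fin g) (Kng k g) ≃g KngMinusHole n g h where
  toEquiv := (Equiv.sumProdDistrib (Fin h) (Fin k) (Fin g)).symm.trans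
    (Equiv.prodCongr (finSumFinEquiv.trans (finCongr hk)) (Equiv.refl _))
  map_rel_iff' := by
    rintro (⟨i, a⟩ | ⟨i, a⟩) (⟨j, b⟩ | ⟨j, b⟩) <;>
      simp [KngMinusHole, Kng, Fin.ext_iff] <;> omega

section joinBlock

variable {ι W : Type*} {G : SimpleGraph W}

/-- `[a, b, (l, 0) - (l, 1)]` for `e = s(a, b)`; `Sym2.out` fixes one orientation of `e`, since
`[a, b, …]` and `[b, a, …]` would be distinct blocks with the same edges. -/
noncomputable def joinBlock (l : ι) (e : Sym2 W) : Fin 4 → (ι × Fin 2) ⊕ W :=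
  ![.inr e.out.1, .inr e.out.2, .inl (l, 0), .inl (l, 1)]

lemma mem_copyEdges_joinBlock {l : ι} {e : Sym2 W} {z : Sym2 ((ι × Fin 2) ⊕ W)} :
    z ∈ copyEdges (joinBlock l e) ↔
      z = e.map .inr ∨ ∃ a ∈ e, ∃ i, z = s(.inr a, .inl (l, i)) := by
  obtain ⟨⟨a, b⟩, hp⟩ : ∃ p, e.out = p := ⟨_, rfl⟩
  have he : e = s(a, b) := by rw [← Quot.out_eq e, hp]
  rw [joinBlock, hp]
  clear hp
  subst he
  simp only [mem_copyEdges_vecCons, Sym2.map_mk, Sym2.mem_iff, Fin.exists_fin_two]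
  constructor
  · rintro (h | h | h | h | h) <;> simp [h]
  · rintro (h | ⟨c, rfl | rfl, h | h⟩) <;> simp [h, Sym2.eq_swap]

lemma joinBlock_injective {l : ι} {e : Sym2 W} (he : e ∈ G.edgeSet) :
    Injective (joinBlock l e) := by
  have hne : e.out.1 ≠ e.out.2 := by
    apply G.ne_of_adj
    rwa [← mem_edgeSet, Sym2.mk, e.out_eq]
  intro i j hij
  fin_cases i <;> fin_cases j <;> simp_all [joinBlock, eq_comm]

lemma copyEdges_joinBlock_subset {l : ι} {e : Sym2 W} (he : e ∈ G.edgeSet) :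
    copyEdges (joinBlock l e) ⊆ (emptyJoin (ι × Fin 2) G).edgeSet := by
  intro z hz
  rcases mem_copyEdges_joinBlock.mp hz with rfl | ⟨a, -, i, rfl⟩
  · induction e using Sym2.ind with
    | _ a b => simpa using he
  · simp

variable {M : ι → G.Subgraph}

lemma eq_of_mem_copyEdges_joinBlock (hM : ∀ l, (M l).IsMatching)
    (hdisj : Pairwise (Disjoint on fun l => (M l).edgeSet)) {l l' : ι} {e e' : Sym2 W}
    {z : Sym2 ((ι × Fin 2) ⊕ W)} (he : e ∈ (M l).edgeSet) (he' : e' ∈ (M l').edgeSet)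
    (hz : z ∈ copyEdges (joinBlock l e)) (hz' : z ∈ copyEdges (joinBlock l' e')) :
    l = l' ∧ e = e' := by
  rcases mem_copyEdges_joinBlock.mp hz with rfl | ⟨a, ha, i, rfl⟩ <;>
    rcases mem_copyEdges_joinBlock.mp hz' with hzz | ⟨a', ha', i', hzz⟩
  · obtain rfl : e = e' := Sym2.map.injective Sum.inr_injective hzz
    exact ⟨by_contra fun hll => Set.disjoint_left.mp (hdisj hll) he he', rfl⟩
  · induction e using Sym2.ind
    simp at hzz
  · induction e' using Sym2.ind
    simp at hzz
  · simp only [Sym2.eq_iff, Sum.inr.injEq, Sum.inl.injEq, Prod.mk.injEq, reduceCtorEq,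
      and_false, or_false] at hzz
    obtain ⟨rfl, rfl, -⟩ := hzz
    exact ⟨rfl, (hM l).eq_of_mem_edgeSet he he' ha ha'⟩

lemma exists_joinBlock_of_mem_edgeSet (hM : ∀ l, (M l).IsPerfectMatching)
    (hcover : ∀ e ∈ G.edgeSet, ∃ l, e ∈ (M l).edgeSet) {z : Sym2 ((ι × Fin 2) ⊕ W)}
    (hz : z ∈ (emptyJoin (ι × Fin 2) G).edgeSet) :
    ∃ l e, e ∈ (M l).edgeSet ∧ z ∈ copyEdges (joinBlock l e) := by
  have cross : ∀ a l i, ∃ l' e, e ∈ (M l').edgeSet ∧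
      s(.inr a, .inl (l, i)) ∈ copyEdges (joinBlock l' e) := by
    intro a l i
    obtain ⟨b, hab, -⟩ := (M l).isPerfectMatching_iff.mp (hM l) a
    exact ⟨l, s(a, b), hab, mem_copyEdges_joinBlock.mpr (.inr ⟨a, Sym2.mem_mk_left a b, i, rfl⟩)⟩
  induction z using Sym2.ind with
  | _ x y =>
    rcases x with ⟨l, i⟩ | a <;> rcases y with ⟨l', i'⟩ | b
    · simp at hz
    · simpa [Sym2.eq_swap] using cross b l i
    · exact cross a l' i'
    · obtain ⟨l, hl⟩ := hcover s(a, b) (by simpa using hz)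
      exact ⟨l, s(a, b), hl, mem_copyEdges_joinBlock.mpr (.inl rfl)⟩

theorem exists_isK4eDecomp_emptyJoin [Finite ι] [Finite W] (hM : ∀ l, (M l).IsPerfectMatching)
    (hdisj : Pairwise (Disjoint on fun l => (M l).edgeSet))
    (hcover : ∀ e ∈ G.edgeSet, ∃ l, e ∈ (M l).edgeSet) :
    ∃ B, IsK4eDecomp (emptyJoin (ι × Fin 2) G) B := by
  let block (p : {p : ι × Sym2 W // p.2 ∈ (M p.1).edgeSet}) := joinBlock p.1.1 p.1.2
  have hG {l e} (he : e ∈ (M l).edgeSet) : e ∈ G.edgeSet := (M l).edgeSet_subset he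
  refine ⟨(Set.finite_range block).toFinset, ⟨?_, ?_, ?_⟩, ?_⟩
  all_goals simp only [Set.Finite.mem_toFinset, Set.forall_mem_range, Set.exists_range_iff]
  · exact fun p => joinBlock_injective (hG p.2)
  · exact fun p => copyEdges_joinBlock_subset (hG p.2)
  · refine fun p q hpq => Set.disjoint_left.mpr fun z hz hz' => hpq ?_
    obtain ⟨hl, he⟩ := eq_of_mem_copyEdges_joinBlock (fun l => (hM l).1) hdisj p.2 q.2 hz hz'
    simp only [block, hl, he]
  · intro z hz
    obtain ⟨l, e, he, hze⟩ := exists_joinBlock_of_mem_edgeSet hM hcover hz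
    exact ⟨⟨(l, e), he⟩, hze⟩

end joinBlock

theorem stmt14_general (g h n : ℕ) (hn : 2 * n = 3 * h + 2)
    (h1f : ∃ F : Finset (SimpleGraph.Subgraph (Kng (n - h) g)),
      F.card = (n - h - 1) * g ∧ (∀ M ∈ F, M.IsPerfectMatching) ∧
      (∀ M ∈ F, ∀ M' ∈ F, M ≠ M' → Disjoint M.edgeSet M'.edgeSet) ∧
      (⋃ M ∈ F, M.edgeSet) = (Kng (n - h) g).edgeSet) :
    ∃ B : Finset (Fin 4 → Fin n × Fin g), IsK4eDecomp (KngMinusHole n g h) B := by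
  obtain ⟨F, hFcard, hFpm, hFdisj, hFcover⟩ := h1f
  have hcard : Fintype.card (Fin h × Fin g) = Fintype.card (F × Fin 2) := by
    simp only [Fintype.card_prod, Fintype.card_fin, Fintype.card_coe, hFcard]
    rw [mul_right_comm, show (n - h - 1) * 2 = h by omega]
  obtain ⟨B, hB⟩ := exists_isK4eDecomp_emptyJoin (M := ((↑) : F → (Kng (n - h) g).Subgraph))
    (fun M => hFpm M M.2) (fun M M' hne => hFdisj M M.2 M' M'.2 (Subtype.coe_ne_coe.mpr hne))
    (fun e he => by simpa [← hFcover] using he)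
  exact ⟨_, hB.map_iso ((emptyJoinCongr (Fintype.equivOfCardEq hcard).symm).trans
    (emptyJoinIsoKngMinusHole (by omega)))⟩

theorem stmt14 (g h n : ℕ) (hg : 1 ≤ g) (hh : 2 ≤ h) (heven : h % 2 = 0)
    (hmod : g * (h + 2) % 4 = 0) (hn : 2 * n = 3 * h + 2)
    (h1f : ∃ F : Finset (SimpleGraph.Subgraph (Kng (n - h) g)),
      F.card = (n - h - 1) * g ∧ (∀ M ∈ F, M.IsPerfectMatching) ∧
      (∀ M ∈ F, ∀ M' ∈ F, M ≠ M' → Disjoint M.edgeSet M'.edgeSet) ∧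
      (⋃ M ∈ F, M.edgeSet) = (Kng (n - h) g).edgeSet) :
    ∃ B : Finset (Fin 4 → Fin n × Fin g), IsK4eDecomp (KngMinusHole n g h) B :=
  stmt14_general g h n hn h1f
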